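/- For βa = Var(X)^{-1}Cov(X, Ua) (a = 0,1), Var(Ua - βaᵀX) = Var(Ua) - βaᵀVar(X)βa, and hence (1/(4π1))Var(U1-β1ᵀX) + (1/(4π0))Var(U0-β0ᵀX) + ¼(β1-β0)ᵀVar(X)(β1-β0) - [(1/(4π1))Var(U1) + (1/(4π0))Var(U0)] = -(1/(4π1))β1ᵀΣβ1 - (1/(4π0))β0ᵀΣβ0 + ¼(β1-β0)ᵀΣ(β1-β0), where Σ = Var(X), and this quantity equals -(1/(4π1π0))(π0β1+π1β0)ᵀΣ(π0β1+π1β0). -/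

import Mathlib

/-!
Bilinearity of the covariance gives `Var(U - βᵀX) = Var U - 2 βᵀc + βᵀΣβ` with `c = Cov(X, U)`;
for the regression coefficient the normal equations `Σβ = c` turn this into `Var U - βᵀΣβ`.
The remaining identity is purely algebraic: with `π₀ + π₁ = 1`, both sides are the same
quadratic form in `β₀, β₁`, since `1/4 - 1/(4π₁) = -π₀/(4π₁)`.
-/

open MeasureTheory ProbabilityTheory Matrix

/-- Covariance of two real random variables. -/
noncomputable def cov {Ω : Type*} [MeasurableSpace Ω] (μ : Measure Ω) (f g : Ω → ℝ) : ℝ :=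
  (∫ ω, f ω * g ω ∂μ) - (∫ ω, f ω ∂μ) * ∫ ω, g ω ∂μ

section Regression

variable {Ω ι : Type*} [MeasurableSpace Ω] {μ : Measure Ω} [Fintype ι]
  {X : ι → Ω → ℝ} {U : Ω → ℝ}

lemma cov_eq_covariance [IsProbabilityMeasure μ] {f g : Ω → ℝ} (hf : MemLp f 2 μ)
    (hg : MemLp g 2 μ) : cov μ f g = cov[f, g; μ] :=
  (covariance_eq_sub hf hg).symm

lemma variance_sub_linearCombination [IsFiniteMeasure μ] (hX : ∀ i, MemLp (X i) 2 μ)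
    (hU : MemLp U 2 μ) (β : ι → ℝ) :
    Var[fun ω ↦ U ω - ∑ i, β i * X i ω; μ]
      = Var[U; μ] - 2 * β ⬝ᵥ (fun i ↦ cov[X i, U; μ])
        + β ⬝ᵥ (of fun i j ↦ cov[X i, X j; μ]) *ᵥ β := by
  have hβX : ∀ i, MemLp (fun ω ↦ β i * X i ω) 2 μ := fun i ↦ (hX i).const_mul (β i)
  rw [variance_fun_sub hU (memLp_finsetSum _ fun i _ ↦ hβX i),
    covariance_fun_sum_right hβX hU, variance_fun_sum hβX]
  simp only [covariance_const_mul_left, covariance_const_mul_right, covariance_comm U,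
    dotProduct, mulVec, of_apply, Finset.mul_sum]
  congr 1
  exact Finset.sum_congr rfl fun i _ ↦ Finset.sum_congr rfl fun j _ ↦ by ring

lemma variance_sub_of_mulVec_eq_covariance [IsFiniteMeasure μ] (hX : ∀ i, MemLp (X i) 2 μ)
    (hU : MemLp U 2 μ) {β : ι → ℝ}
    (hβ : (of fun i j ↦ cov[X i, X j; μ]) *ᵥ β = fun i ↦ cov[X i, U; μ]) :
    Var[fun ω ↦ U ω - ∑ i, β i * X i ω; μ]
      = Var[U; μ] - β ⬝ᵥ (of fun i j ↦ cov[X i, X j; μ]) *ᵥ β := by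
  rw [variance_sub_linearCombination hX hU, ← hβ]
  ring

end Regression

lemma Matrix.neg_inv_weighted_quadForms_add_quadForm_sub {K n : Type*} [Field K] [Fintype n]
    (S : Matrix n n K) (b₀ b₁ : n → K) {π₀ π₁ : K} (hπ₀ : π₀ ≠ 0) (hπ₁ : π₁ ≠ 0)
    (hπ : π₀ + π₁ = 1) :
    -(1 / (4 * π₁)) * (b₁ ⬝ᵥ S *ᵥ b₁) - (1 / (4 * π₀)) * (b₀ ⬝ᵥ S *ᵥ b₀)
        + (1 / 4) * ((b₁ - b₀) ⬝ᵥ S *ᵥ (b₁ - b₀))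
      = -(1 / (4 * π₁ * π₀)) * ((π₀ • b₁ + π₁ • b₀) ⬝ᵥ S *ᵥ (π₀ • b₁ + π₁ • b₀)) := by
  simp only [mulVec_sub, mulVec_add, mulVec_smul, sub_dotProduct, dotProduct_sub,
    add_dotProduct, dotProduct_add, smul_dotProduct, dotProduct_smul, smul_eq_mul]
  obtain rfl : π₀ = 1 - π₁ := eq_sub_of_add_eq hπ
  field_simp
  ring

/-- For βa = Var(X)⁻¹Cov(X,Ua), Var(Ua - βaᵀX) = Var(Ua) - βaᵀΣβa,
and the adjusted-minus-unadjusted variance difference equals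
-(1/(4π1))β1ᵀΣβ1 - (1/(4π0))β0ᵀΣβ0 + ¼(β1-β0)ᵀΣ(β1-β0)
= -(1/(4π1π0))(π0β1+π1β0)ᵀΣ(π0β1+π1β0). -/
theorem stmt_14 {Ω : Type*} [MeasurableSpace Ω] (μ : Measure Ω) [IsProbabilityMeasure μ]
    {p : ℕ} (X : Ω → Fin p → ℝ) (U0 U1 : Ω → ℝ)
    (hX : ∀ i, MemLp (fun ω => X ω i) 2 μ)
    (hU0 : MemLp U0 2 μ) (hU1 : MemLp U1 2 μ)
    (π1 : ℝ) (hπ1 : π1 ∈ Set.Ioo (0 : ℝ) 1) (π0 : ℝ) (hπ0 : π0 = 1 - π1)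
    (Sm : Matrix (Fin p) (Fin p) ℝ)
    (hSm : Sm = Matrix.of fun i j => cov μ (fun ω => X ω i) (fun ω => X ω j))
    (hpd : Sm.PosDef)
    (β0 β1 : Fin p → ℝ)
    (hβ0 : β0 = Sm⁻¹.mulVec fun i => cov μ (fun ω => X ω i) U0)
    (hβ1 : β1 = Sm⁻¹.mulVec fun i => cov μ (fun ω => X ω i) U1) :
    variance (fun ω => U0 ω - ∑ i, β0 i * X ω i) μ
        = variance U0 μ - β0 ⬝ᵥ Sm.mulVec β0
    ∧ variance (fun ω => U1 ω - ∑ i, β1 i * X ω i) μ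
        = variance U1 μ - β1 ⬝ᵥ Sm.mulVec β1
    ∧ (1 / (4 * π1)) * variance (fun ω => U1 ω - ∑ i, β1 i * X ω i) μ
        + (1 / (4 * π0)) * variance (fun ω => U0 ω - ∑ i, β0 i * X ω i) μ
        + (1 / 4) * ((β1 - β0) ⬝ᵥ Sm.mulVec (β1 - β0))
        - ((1 / (4 * π1)) * variance U1 μ + (1 / (4 * π0)) * variance U0 μ)
      = -(1 / (4 * π1)) * (β1 ⬝ᵥ Sm.mulVec β1) - (1 / (4 * π0)) * (β0 ⬝ᵥ Sm.mulVec β0)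
          + (1 / 4) * ((β1 - β0) ⬝ᵥ Sm.mulVec (β1 - β0))
    ∧ -(1 / (4 * π1)) * (β1 ⬝ᵥ Sm.mulVec β1) - (1 / (4 * π0)) * (β0 ⬝ᵥ Sm.mulVec β0)
          + (1 / 4) * ((β1 - β0) ⬝ᵥ Sm.mulVec (β1 - β0))
      = -(1 / (4 * π1 * π0)) * ((π0 • β1 + π1 • β0) ⬝ᵥ Sm.mulVec (π0 • β1 + π1 • β0)) := by
  have hSm' : Sm = of fun i j ↦ cov[fun ω ↦ X ω i, fun ω ↦ X ω j; μ] := by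
    ext i j
    simp [hSm, cov_eq_covariance (hX i) (hX j)]
  have hSm_inv : Sm * Sm⁻¹ = 1 := mul_nonsing_inv _ ((isUnit_iff_isUnit_det Sm).mp hpd.isUnit)
  have residual_variance {U : Ω → ℝ} (hU : MemLp U 2 μ) {β : Fin p → ℝ}
      (hβ : β = Sm⁻¹ *ᵥ fun i ↦ cov μ (fun ω ↦ X ω i) U) :
      variance (fun ω ↦ U ω - ∑ i, β i * X ω i) μ = variance U μ - β ⬝ᵥ Sm *ᵥ β := by
    rw [hSm']
    refine variance_sub_of_mulVec_eq_covariance (X := fun i ω ↦ X ω i) hX hU ?_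
    rw [← hSm', hβ, mulVec_mulVec, hSm_inv, one_mulVec]
    ext i
    exact cov_eq_covariance (hX i) hU
  have var0 := residual_variance hU0 hβ0
  have var1 := residual_variance hU1 hβ1
  refine ⟨var0, var1, by rw [var0, var1]; ring, ?_⟩
  exact neg_inv_weighted_quadForms_add_quadForm_sub Sm β0 β1
    (by rw [hπ0]; linarith [hπ1.2]) hπ1.1.ne' (by rw [hπ0]; ring)
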